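/- Let f be a strongly polar homogeneous mixed polynomial with polar degree d_p whose Milnor fiber monodromy h : F → F generates a free ℤ/d_p action with χ(F) divisible by d_p. Then the zeta function of the monodromy is ζ(t) = (1 − t^{d_p})^{−χ(F)/d_p}. In particular, if d_p = 1 then h = id_F and ζ(t) = (1 − t)^{−χ(F)}. -/

import Mathlib

/-!
Write `D_j(t) = det (1 - t h_{*,j})`. Jacobi's formula and the geometric series
`(1 - t M) ∑_{k<d} t^k M^k = 1 - t^d` (valid as `M^d = 1`) give
`(1 - t^d) D_j' / D_j = -∑_{k<d} tr (h_{*,j}^{k+1}) t^k`. In the alternating sum over `j` all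
Lefschetz numbers `Λ(h^k)`, `0 < k < d`, drop out and only `Λ(h^d) = Λ(id) = χ` survives, so
`ζ` and `(1 - t^d)^{-χ/d}` have the same logarithmic derivative and the same value `1` at `t = 0`;
in characteristic zero they are equal. That `d ∣ χ` follows since the trace of the averaging
projection `d⁻¹ ∑_{k<d} h^k` is its rank.
-/

open Polynomial Matrix

theorem Matrix.exists_trace_eq_natCast_of_isIdempotentElem {K n : Type*} [Field K] [Fintype n]
    [DecidableEq n] {P : Matrix n n K} (hP : IsIdempotentElem P) : ∃ r : ℕ, P.trace = r := by
  have hP' : IsIdempotentElem P.toLin' := hP.map Matrix.toLinAlgEquiv'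
  exact ⟨_, by rw [← Matrix.trace_toLin'_eq, (LinearMap.IsIdempotentElem.isProj_range _ hP').trace]⟩

theorem Matrix.exists_trace_geom_sum_eq_mul_natCast {K n : Type*} [Field K] [CharZero K]
    [Fintype n] [DecidableEq n] {M : Matrix n n K} {d : ℕ} (hd : 0 < d) (hM : M ^ d = 1) :
    ∃ r : ℕ, trace (∑ k ∈ Finset.range d, M ^ k) = d * r := by
  set S := ∑ k ∈ Finset.range d, M ^ k
  have hdK : (d : K) ≠ 0 := Nat.cast_ne_zero.mpr hd.ne'
  -- `d⁻¹ • S` is the projection onto the vectors fixed by `M`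
  have hSM : ∀ k, S * M ^ k = S := by
    have hSM1 : S * M = S := by
      rw [← sub_eq_zero, ← mul_sub_one, geom_sum_mul, hM, sub_self]
    intro k
    induction k with
    | zero => rw [pow_zero, mul_one]
    | succ k ih => rw [pow_succ, ← mul_assoc, ih, hSM1]
  have hSS : S * S = (d : K) • S := by
    rw [Finset.mul_sum, Finset.sum_congr rfl fun k _ => hSM k, Finset.sum_const, Finset.card_range,
      Nat.cast_smul_eq_nsmul]
  obtain ⟨r, hr⟩ := exists_trace_eq_natCast_of_isIdempotentElem (P := (d : K)⁻¹ • S) (by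
    rw [IsIdempotentElem, smul_mul_smul, hSS, smul_smul, inv_mul_cancel_right₀ hdK])
  refine ⟨r, ?_⟩
  rw [trace_smul, smul_eq_mul] at hr
  rw [← hr, mul_inv_cancel_left₀ hdK]

namespace Polynomial

section CommRing

variable {R : Type*} [CommRing R]

def HasLogDeriv (P L G : R[X]) : Prop := G * derivative P = P * L

theorem hasLogDeriv_self (G : R[X]) : HasLogDeriv G (derivative G) G := rfl

theorem HasLogDeriv.mul {P₁ P₂ L₁ L₂ G : R[X]} (h₁ : HasLogDeriv P₁ L₁ G)
    (h₂ : HasLogDeriv P₂ L₂ G) : HasLogDeriv (P₁ * P₂) (L₁ + L₂) G := by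
  unfold HasLogDeriv at *
  rw [derivative_mul]
  linear_combination P₂ * h₁ + P₁ * h₂

theorem HasLogDeriv.prod {ι : Type*} (s : Finset ι) {P L : ι → R[X]} {G : R[X]}
    (h : ∀ i ∈ s, HasLogDeriv (P i) (L i) G) : HasLogDeriv (∏ i ∈ s, P i) (∑ i ∈ s, L i) G := by
  induction s using Finset.cons_induction with
  | empty => simp [HasLogDeriv]
  | cons i s hi ih =>
    rw [Finset.prod_cons, Finset.sum_cons]
    exact (h i (Finset.mem_cons_self i s)).mul (ih fun j hj => h j (Finset.mem_cons_of_mem hj))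

theorem HasLogDeriv.pow {P L G : R[X]} (h : HasLogDeriv P L G) (n : ℕ) :
    HasLogDeriv (P ^ n) (n * L) G := by
  simpa using HasLogDeriv.prod (Finset.range n) fun _ _ => h

end CommRing

variable {K : Type*} [Field K] [CharZero K]

theorem eq_of_derivative_mul_eq_mul_derivative {P Q : K[X]} (h0 : P.eval 0 = Q.eval 0)
    (hQ0 : Q.eval 0 ≠ 0) (h : derivative P * Q = P * derivative Q) : P = Q := by
  set p : PowerSeries K := ↑P
  set q : PowerSeries K := ↑Q
  have hq : PowerSeries.constantCoeff q ≠ 0 := by simpa [q, coeff_zero_eq_eval_zero] using hQ0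
  have hderiv : PowerSeries.derivative K (p * q⁻¹) = PowerSeries.derivative K 1 := by
    have hcoe : PowerSeries.derivative K p * q = p * PowerSeries.derivative K q := by
      simp only [p, q, PowerSeries.derivative_coe, ← Polynomial.coe_mul, h]
    rw [PowerSeries.derivative_one, Derivation.leibniz, PowerSeries.derivative_inv', smul_eq_mul,
      smul_eq_mul]
    linear_combination q⁻¹ ^ 2 * hcoe
      - q⁻¹ * PowerSeries.derivative K p * PowerSeries.mul_inv_cancel q hq
  have hquot : p * q⁻¹ = 1 :=
    PowerSeries.derivative.ext hderiv (by simp [p, q, coeff_zero_eq_eval_zero, h0, hQ0])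
  have hpq : p = q := by
    rw [← one_mul q, ← hquot, mul_assoc, PowerSeries.inv_mul_cancel q hq, mul_one]
  exact Polynomial.coe_inj.mp hpq

theorem HasLogDeriv.eq {P Q L G : K[X]} (hP : HasLogDeriv P L G) (hQ : HasLogDeriv Q L G)
    (hG : G ≠ 0) (h0 : P.eval 0 = Q.eval 0) (hQ0 : Q.eval 0 ≠ 0) : P = Q := by
  refine eq_of_derivative_mul_eq_mul_derivative h0 hQ0 (mul_left_cancel₀ hG ?_)
  unfold HasLogDeriv at hP hQ
  linear_combination Q * hP - P * hQ

theorem HasLogDeriv.prod_zpow_eq_zpow {ι : Type*} (s : Finset ι) {D L : ι → K[X]} {e : ι → ℤ}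
    {G : K[X]} {c : ℤ} (hD : ∀ i ∈ s, HasLogDeriv (D i) (L i) G) (hD0 : ∀ i ∈ s, (D i).eval 0 = 1)
    (hG0 : G.eval 0 = 1) (hL : ∑ i ∈ s, (e i : K[X]) * L i = c * derivative G) :
    ∏ i ∈ s, algebraMap K[X] (RatFunc K) (D i) ^ e i = algebraMap K[X] (RatFunc K) G ^ c := by
  set φ := algebraMap K[X] (RatFunc K)
  -- Clear the negative exponents: `∏ D i ^ (e i)⁺ * G ^ c⁻` and `∏ D i ^ (e i)⁻ * G ^ c⁺` have the
  -- same logarithmic derivative.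
  have hsplit : ∀ n : ℤ, ((n.toNat : ℕ) : K[X]) = n + ((-n).toNat : ℕ) := fun n => by
    have h : (n.toNat : ℤ) = n + ((-n).toNat : ℤ) := by omega
    exact_mod_cast congrArg (Int.cast : ℤ → K[X]) h
  have hL' : ∑ i ∈ s, ((e i).toNat : K[X]) * L i + ((-c).toNat : K[X]) * derivative G
      = ∑ i ∈ s, ((-e i).toNat : K[X]) * L i + (c.toNat : K[X]) * derivative G := by
    rw [Finset.sum_congr rfl fun i _ => by rw [hsplit (e i), add_mul], Finset.sum_add_distrib, hL,
      hsplit (-c), neg_neg, Int.cast_neg]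
    ring
  have hP := (HasLogDeriv.prod s fun i hi => (hD i hi).pow (e i).toNat).mul
    ((hasLogDeriv_self G).pow (-c).toNat)
  have hQ := (HasLogDeriv.prod s fun i hi => (hD i hi).pow (-e i).toNat).mul
    ((hasLogDeriv_self G).pow c.toNat)
  have hprod0 : ∀ f : ι → ℕ, (∏ i ∈ s, D i ^ f i).eval 0 = 1 := fun f => by
    rw [eval_prod]
    exact Finset.prod_eq_one fun i hi => by rw [eval_pow, hD0 i hi, one_pow]
  have hG : G ≠ 0 := by rintro rfl; simp at hG0
  have hPQ := hP.eq (hL' ▸ hQ) hG (by simp [hprod0, hG0]) (by simp [hprod0, hG0])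
  have hφPQ := congrArg φ hPQ
  simp only [map_mul, map_prod, map_pow] at hφPQ
  have hφ : ∀ {p : K[X]}, p.eval 0 = 1 → φ p ≠ 0 := fun hp =>
    (map_ne_zero_iff φ (RatFunc.algebraMap_injective K)).mpr (by rintro rfl; simp at hp)
  have hφD : ∀ i ∈ s, φ (D i) ≠ 0 := fun i hi => hφ (hD0 i hi)
  calc ∏ i ∈ s, φ (D i) ^ e i
      = (∏ i ∈ s, φ (D i) ^ (e i).toNat) / ∏ i ∈ s, φ (D i) ^ (-e i).toNat := by
        rw [← Finset.prod_div_distrib]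
        refine Finset.prod_congr rfl fun i hi => ?_
        rw [← zpow_natCast, ← zpow_natCast, ← zpow_sub₀ (hφD i hi), Int.toNat_sub_toNat_neg]
    _ = φ G ^ c.toNat / φ G ^ (-c).toNat := by
        rw [div_eq_div_iff (Finset.prod_ne_zero_iff.mpr fun i hi => pow_ne_zero _ (hφD i hi))
          (pow_ne_zero _ (hφ hG0))]
        linear_combination hφPQ
    _ = φ G ^ c := by
        rw [← zpow_natCast, ← zpow_natCast, ← zpow_sub₀ (hφ hG0), Int.toNat_sub_toNat_neg]

theorem derivative_det {R n : Type*} [CommRing R] [Fintype n] [DecidableEq n]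
    (A : Matrix n n R[X]) :
    derivative A.det = trace (adjugate A * A.map derivative) := by
  have hcol : ∀ k, (adjugate A * A.map derivative) k k
      = ∑ σ : Equiv.Perm n, Equiv.Perm.sign σ •
          ((∏ i ∈ Finset.univ.erase k, A (σ i) i) * derivative (A (σ k) k)) := by
    intro k
    change (adjugate A *ᵥ fun i => derivative (A i k)) k = _
    rw [← cramer_eq_adjugate_mulVec, cramer_apply, det_apply]
    refine Finset.sum_congr rfl fun σ _ => ?_
    rw [← Finset.prod_erase_mul _ _ (Finset.mem_univ k)]
    congr 2
    · refine Finset.prod_congr rfl fun i hi => ?_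
      rw [updateCol_ne (Finset.ne_of_mem_erase hi)]
    · rw [updateCol_self]
  simp only [trace, diag, hcol, det_apply, derivative_sum, derivative_smul, derivative_prod_finset,
    Finset.smul_sum]
  exact Finset.sum_comm

theorem hasLogDeriv_charpolyRev {R n : Type*} [CommRing R] [Fintype n] [DecidableEq n]
    {M : Matrix n n R} {d : ℕ} (hM : M ^ d = 1) :
    HasLogDeriv M.charpolyRev (-∑ k ∈ Finset.range d, C (trace (M ^ (k + 1))) * X ^ k)
      (1 - X ^ d) := by
  set A : Matrix n n R[X] := 1 - (X : R[X]) • M.map C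
  set S : Matrix n n R[X] := ∑ k ∈ Finset.range d, ((X : R[X]) • M.map C) ^ k
  have hpow : ∀ k, ((X : R[X]) • M.map C) ^ k = (X ^ k : R[X]) • (M ^ k).map C := fun k => by
    rw [_root_.smul_pow, Matrix.map_pow]
  have hgeom : A * S = (1 - X ^ d : R[X]) • 1 := by
    rw [mul_neg_geom_sum, hpow, hM, Matrix.map_one _ (map_zero C) (map_one C), sub_smul, one_smul]
  have hadj : (1 - X ^ d : R[X]) • adjugate A = A.det • S := by
    rw [← mul_one (adjugate A), ← mul_smul_comm, ← hgeom, ← mul_assoc, adjugate_mul, smul_one_mul]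
  have hderiv : A.map derivative = -M.map C := by
    ext i j
    by_cases h : i = j <;> simp [A, h]
  have htrace : trace (S * M.map C) = ∑ k ∈ Finset.range d, C (trace (M ^ (k + 1))) * X ^ k := by
    simp only [S, Finset.sum_mul, trace_sum, hpow, smul_mul_assoc, ← Matrix.map_mul, ← pow_succ,
      trace_smul, smul_eq_mul, ← AddMonoidHom.map_trace, mul_comm (X ^ _ : R[X])]
  calc (1 - X ^ d) * derivative M.charpolyRev
      = -trace (((1 - X ^ d : R[X]) • adjugate A) * M.map C) := by
        rw [charpolyRev, derivative_det, hderiv, mul_neg, trace_neg, smul_mul_assoc, trace_smul,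
          smul_eq_mul, mul_neg]
    _ = _ := by rw [hadj, smul_mul_assoc, trace_smul, smul_eq_mul, htrace, charpolyRev, mul_neg]

end Polynomial

theorem RatFunc.algebraMap_charpolyRev {K n : Type*} [CommRing K] [IsDomain K] [Fintype n]
    [DecidableEq n] (M : Matrix n n K) :
    algebraMap K[X] (RatFunc K) M.charpolyRev
      = det (1 - M.map fun a => RatFunc.X * RatFunc.C a) := by
  rw [charpolyRev, RingHom.map_det]
  congr 1
  ext i j
  by_cases h : i = j <;> simp [h, one_apply, RatFunc.algebraMap_C, mul_comm RatFunc.X]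

section Lefschetz

variable {R ι : Type*} [CommRing R] [Fintype ι] {n : ι → Type*} [∀ i, Fintype (n i)]
  [∀ i, DecidableEq (n i)]

/-- With `w i = (-1) ^ i` and `M i` the action of `h` on `H_i(F; ℚ)`, this is `Λ(h^k)`. -/
def lefschetzNumber (w : ι → ℤ) (M : ∀ i, Matrix (n i) (n i) R) (k : ℕ) : R :=
  ∑ i, (w i : R) * trace (M i ^ k)

theorem exists_lefschetzNumber_zero_eq_mul {K : Type*} [Field K] [CharZero K] {w : ι → ℤ}
    {M : ∀ i, Matrix (n i) (n i) K} {d : ℕ} (hd : 0 < d) (hM : ∀ i, M i ^ d = 1)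
    (hΛ : ∀ k, 0 < k → k < d → lefschetzNumber w M k = 0) :
    ∃ z : ℤ, lefschetzNumber w M 0 = d * z := by
  choose r hr using fun i => exists_trace_geom_sum_eq_mul_natCast hd (hM i)
  refine ⟨∑ i, w i * r i, ?_⟩
  calc lefschetzNumber w M 0 = ∑ k ∈ Finset.range d, lefschetzNumber w M k :=
        (Finset.sum_eq_single_of_mem 0 (Finset.mem_range.mpr hd) fun k hk hk0 =>
          hΛ k (Nat.pos_of_ne_zero hk0) (Finset.mem_range.mp hk)).symm
    _ = ∑ i, (w i : K) * trace (∑ k ∈ Finset.range d, M i ^ k) := by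
        simp only [lefschetzNumber, trace_sum, Finset.mul_sum]
        exact Finset.sum_comm
    _ = d * ∑ i, w i * r i := by
        push_cast
        simp only [hr, Finset.mul_sum]
        exact Finset.sum_congr rfl fun i _ => by ring

theorem sum_intCast_mul_sum_trace_pow_succ_mul_X_pow {w : ι → ℤ} {M : ∀ i, Matrix (n i) (n i) R}
    {d : ℕ} (hd : 0 < d) (hΛ : ∀ k, 0 < k → k < d → lefschetzNumber w M k = 0) :
    ∑ i, (w i : R[X]) * ∑ k ∈ Finset.range d, C (trace (M i ^ (k + 1))) * X ^ k
      = C (lefschetzNumber w M d) * X ^ (d - 1) := by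
  calc _ = ∑ k ∈ Finset.range d, C (lefschetzNumber w M (k + 1)) * X ^ k := by
        simp only [lefschetzNumber, map_sum, map_mul, map_intCast, Finset.mul_sum, Finset.sum_mul,
          mul_assoc]
        exact Finset.sum_comm
    _ = _ := by
        rw [Finset.sum_eq_single_of_mem (d - 1) (Finset.mem_range.mpr (by omega))
          fun k hk hkd => ?_, Nat.sub_add_cancel hd]
        rw [hΛ (k + 1) k.succ_pos (by have := Finset.mem_range.mp hk; omega), map_zero, zero_mul]

theorem prod_algebraMap_charpolyRev_zpow_neg {K : Type*} [Field K] [CharZero K] {w : ι → ℤ}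
    {M : ∀ i, Matrix (n i) (n i) K} {d : ℕ} (hd : 0 < d) (hM : ∀ i, M i ^ d = 1)
    (hΛ : ∀ k, 0 < k → k < d → lefschetzNumber w M k = 0) {z : ℤ}
    (hz : lefschetzNumber w M 0 = d * z) :
    ∏ i, algebraMap K[X] (RatFunc K) (M i).charpolyRev ^ (-w i)
      = algebraMap K[X] (RatFunc K) (1 - X ^ d) ^ (-z) := by
  refine HasLogDeriv.prod_zpow_eq_zpow _ (fun i _ => hasLogDeriv_charpolyRev (hM i))
    (fun i _ => eval_charpolyRev) (by simp [hd.ne']) ?_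
  have hΛd : lefschetzNumber w M d = d * z := by simpa [lefschetzNumber, hM] using hz
  simp only [Int.cast_neg, neg_mul_neg, sum_intCast_mul_sum_trace_pow_succ_mul_X_pow hd hΛ, hΛd,
    derivative_sub, derivative_one, derivative_X_pow, map_mul, map_intCast]
  ring

end Lefschetz

open Matrix RatFunc

/-- zeta function of a periodic monodromy. Model: the rational homology of
the Milnor fiber `F` is a graded family of `ℚ`-vector spaces of dimensions `m j`, on which
the monodromy `h` acts by matrices `M j` with `(M j)^d = 1` (periodicity, `d = d_p`).
The hypothesis that `h` generates a free `ℤ/d`-action is encoded by the vanishing of the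
Lefschetz numbers of the intermediate iterates `h^k`, `0 < k < d`, while the Lefschetz
number of the identity is `χ(F) = ∑ (-1)^j m j = χ`.  Then the zeta function
`ζ(t) = ∏_j det(1 - t h_{*,j})^{(-1)^{j+1}}` equals `(1 - t^d)^{-χ/d}`.
In particular if `d = 1` then `h_* = id` (so `h ≃ id_F` on homology). -/
theorem zeta_function_of_periodic_monodromy
    (N d : ℕ) (hd : 0 < d) (χ : ℤ)
    (m : Fin N → ℕ) (M : ∀ j, Matrix (Fin (m j)) (Fin (m j)) ℚ)
    (hper : ∀ j, (M j) ^ d = 1)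
    (hlef : ∀ k, 0 < k → k < d → ∑ j : Fin N, (-1 : ℚ) ^ (j : ℕ) * ((M j) ^ k).trace = 0)
    (hchi : ∑ j : Fin N, (-1 : ℤ) ^ (j : ℕ) * (m j : ℤ) = χ) :
    (∏ j : Fin N, (Matrix.det (1 - (M j).map (fun a => (RatFunc.X : RatFunc ℚ) * algebraMap ℚ (RatFunc ℚ) a))) ^ ((-1 : ℤ) ^ ((j : ℕ) + 1)))
      = (1 - (RatFunc.X : RatFunc ℚ) ^ d) ^ (-(χ / d)) ∧
    (d = 1 → ∀ j, M j = 1) := by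
  refine ⟨?_, fun hd1 j => by simpa [hd1] using hper j⟩
  set w : Fin N → ℤ := fun j => (-1) ^ (j : ℕ)
  have hΛ : ∀ k, 0 < k → k < d → lefschetzNumber w M k = 0 := fun k hk hkd => by
    simpa [lefschetzNumber, w] using hlef k hk hkd
  have hΛ0 : lefschetzNumber w M 0 = χ := by simp [lefschetzNumber, w, ← hchi]
  obtain ⟨z, hz⟩ := exists_lefschetzNumber_zero_eq_mul hd hper hΛ
  have hχ : χ = d * z := by exact_mod_cast hΛ0.symm.trans hz
  -- `algebraMap ℚ (RatFunc ℚ)` is found as `DivisionRing.toRatAlgebra`, not via `RatFunc.C`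
  have hC : ∀ a : ℚ, algebraMap ℚ (RatFunc ℚ) a = RatFunc.C a :=
    RingHom.congr_fun (Subsingleton.elim _ _)
  have hsign : ∀ j : Fin N, (-1 : ℤ) ^ ((j : ℕ) + 1) = -w j := fun j => by simp [w, pow_succ]
  simp_rw [hC, ← RatFunc.algebraMap_charpolyRev, hsign, hχ,
    Int.mul_ediv_cancel_left _ (Int.natCast_ne_zero.mpr hd.ne')]
  simpa using prod_algebraMap_charpolyRev_zpow_neg hd hper hΛ hz
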